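/- Let G be a group generated by X ⊆ G, and suppose m ∈ ℕ is such that every element of G can be written as a product of at most m conjugates of elements of X ∪ X⁻¹. Then every element of G is a product of at most 2m palindromes with respect to X; that is, pw(G, X) ≤ 2m. -/

import Mathlib

/-- An element `g` of a group `G` is a palindrome with respect to `X ⊆ G` if `g` is the
product of some word over `X^{±1}` that equals its own reverse. -/
def IsPalindrome {G : Type*} [Group G] (X : Set G) (g : G) : Prop :=
  ∃ l : List G, (∀ t ∈ l, t ∈ X ∪ X⁻¹) ∧ l.reverse = l ∧ l.prod = g

/-!
Write `c = w.prod` for a word `w` over `X^{±1}` and let `r` be the product of the reversed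
word. Then `c * x * c⁻¹ = (c * x * r) * (c * r)⁻¹`, and both factors are palindromes: the
words `w ++ [x] ++ w.reverse` and `w ++ w.reverse` are palindromic, and inverting the letters
of a palindromic word keeps it palindromic. So each conjugate costs two palindromes.
-/

theorem List.exists_prod_eq_length_eq_two_mul {M : Type*} [Monoid M] {S T : Set M}
    (hST : ∀ s ∈ S, ∃ a ∈ T, ∃ b ∈ T, a * b = s) (l : List M) (hl : ∀ s ∈ l, s ∈ S) :
    ∃ l' : List M, l'.length = 2 * l.length ∧ (∀ t ∈ l', t ∈ T) ∧ l'.prod = l.prod := by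
  induction l with
  | nil => exact ⟨[], rfl, by simp, rfl⟩
  | cons s l ih =>
    obtain ⟨l', hlen, hT, hprod⟩ := ih fun t ht => hl t (List.mem_cons_of_mem s ht)
    obtain ⟨a, ha, b, hb, rfl⟩ := hST s (hl s List.mem_cons_self)
    refine ⟨a :: b :: l', by simp [hlen]; ring, ?_, by simp [hprod, mul_assoc]⟩
    simp only [List.mem_cons, forall_eq_or_imp]
    exact ⟨ha, hb, hT⟩

section Palindrome

variable {G : Type*} [Group G] {X : Set G}

theorem inv_mem_union_inv {t : G} (ht : t ∈ X ∪ X⁻¹) : t⁻¹ ∈ X ∪ X⁻¹ := by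
  rwa [← Set.mem_inv, Set.union_inv, inv_inv, Set.union_comm]

theorem exists_list_prod_eq_of_closure_eq_top (hX : Subgroup.closure X = ⊤) (c : G) :
    ∃ w : List G, (∀ t ∈ w, t ∈ X ∪ X⁻¹) ∧ w.prod = c := by
  have hc : c ∈ Submonoid.closure (X ∪ X⁻¹) := by
    rw [← Subgroup.closure_toSubmonoid, hX]
    trivial
  exact Submonoid.exists_list_of_mem_closure hc

theorem isPalindrome_one : IsPalindrome X 1 :=
  ⟨[], by simp, rfl, rfl⟩

theorem isPalindrome_of_mem {x : G} (hx : x ∈ X ∪ X⁻¹) : IsPalindrome X x :=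
  ⟨[x], by simpa using hx, rfl, List.prod_singleton⟩

theorem IsPalindrome.inv {p : G} (hp : IsPalindrome X p) : IsPalindrome X p⁻¹ := by
  obtain ⟨l, hl, hrev, rfl⟩ := hp
  have hrev' : (l.map (·⁻¹)).reverse = l.map (·⁻¹) := by rw [← List.map_reverse, hrev]
  refine ⟨l.map (·⁻¹), ?_, hrev', ?_⟩
  · simp only [List.mem_map]
    rintro _ ⟨t, ht, rfl⟩
    exact inv_mem_union_inv (hl t ht)
  · rw [List.prod_inv_reverse, hrev']

theorem IsPalindrome.prod_mul_mul_prod_reverse {p : G} (hp : IsPalindrome X p) {w : List G}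
    (hw : ∀ t ∈ w, t ∈ X ∪ X⁻¹) : IsPalindrome X (w.prod * p * w.reverse.prod) := by
  obtain ⟨l, hl, hrev, rfl⟩ := hp
  refine ⟨w ++ l ++ w.reverse, ?_, by simp [hrev], by simp [mul_assoc]⟩
  simp only [List.mem_append, List.mem_reverse]
  rintro t ((ht | ht) | ht)
  exacts [hw t ht, hl t ht, hw t ht]

theorem exists_isPalindrome_mul_eq_conj (hX : Subgroup.closure X = ⊤) {x : G}
    (hx : x ∈ X ∪ X⁻¹) (c : G) :
    ∃ p, IsPalindrome X p ∧ ∃ q, IsPalindrome X q ∧ p * q = c * x * c⁻¹ := by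
  obtain ⟨w, hw, rfl⟩ := exists_list_prod_eq_of_closure_eq_top hX c
  exact ⟨_, (isPalindrome_of_mem hx).prod_mul_mul_prod_reverse hw,
    _, (isPalindrome_one.prod_mul_mul_prod_reverse hw).inv, by group⟩

end Palindrome

/-- If `G` is generated by `X` and every element of `G` is a product of at
most `m` conjugates of elements of `X ∪ X⁻¹`, then every element of `G` is a product of
at most `2m` palindromes with respect to `X`, i.e. `pw(G, X) ≤ 2m`. -/
theorem palindromic_width_le_twice_conjugate_width {G : Type*} [Group G]
    (X : Set G) (hX : Subgroup.closure X = ⊤) (m : ℕ)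
    (hconj : ∀ g : G, ∃ l : List G, l.length ≤ m ∧
      (∀ t ∈ l, ∃ x ∈ X ∪ X⁻¹, ∃ c : G, t = c * x * c⁻¹) ∧ l.prod = g) :
    ∀ g : G, ∃ ps : List G, ps.length ≤ 2 * m ∧
      (∀ p ∈ ps, IsPalindrome X p) ∧ ps.prod = g := by
  intro g
  obtain ⟨l, hlen, hconjs, rfl⟩ := hconj g
  have hsplit : ∀ s ∈ {s | ∃ x ∈ X ∪ X⁻¹, ∃ c : G, s = c * x * c⁻¹},
      ∃ p ∈ {p | IsPalindrome X p}, ∃ q ∈ {p | IsPalindrome X p}, p * q = s := by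
    rintro _ ⟨x, hx, c, rfl⟩
    exact exists_isPalindrome_mul_eq_conj hX hx c
  obtain ⟨ps, hps, hpal, hprod⟩ := List.exists_prod_eq_length_eq_two_mul hsplit l hconjs
  exact ⟨ps, by omega, hpal, hprod⟩
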